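/- Let r > 1 be a real number and let p and q be r-mighty primes with p > q². If n is a positive integer such that σ_{-r}(q)·u_p(r) < σ_{-r}(n) < σ_{-r}(q·p), then q divides n. -/

import Mathlib

open scoped BigOperators

/-- The divisor function `σ_{-r}(n) = ∑_{d ∣ n} d^{-r}`. -/
noncomputable def sigmaNeg (r : ℝ) (n : ℕ) : ℝ := ∑ d ∈ n.divisors, (d : ℝ) ^ (-r)

/-- `u_p(r) = ∏_{q prime, q > p} (1 - q^{-r})⁻¹`. -/
noncomputable def uAfter (r : ℝ) (p : ℕ) : ℝ :=
  ∏' q : {q : Nat.Primes // p < (q : ℕ)}, (1 - ((q.1 : ℕ) : ℝ) ^ (-r))⁻¹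

/-- A prime `p` is `r`-mighty if `1 + p^{-r} > ∏_{q prime, q > p} (1 - q^{-r})⁻¹`. -/
def Mighty (r : ℝ) (p : ℕ) : Prop := uAfter r p < 1 + (p : ℝ) ^ (-r)

/-- `f_p(k) = σ_{-r}(p^k)` for finite `k`, and `f_p(∞) = (1 - p^{-r})⁻¹`. -/
noncomputable def fReal (r : ℝ) (p : ℕ) (k : ℕ∞) : ℝ :=
  if k = ⊤ then (1 - (p : ℝ) ^ (-r))⁻¹
  else ∑ j ∈ Finset.range (k.toNat + 1), ((p : ℝ) ^ (-r)) ^ j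

/-- The value of `σ_{-r}` on the Steinitz number encoded by `α`. -/
noncomputable def steinitzVal (r : ℝ) (α : Nat.Primes → ℕ∞) : ℝ :=
  ∏' p : Nat.Primes, fReal r (p : ℕ) (α p)

/-- The topological closure of the image `σ_{-r}(ℕ)` in `ℝ`. -/
noncomputable def sigmaClosure (r : ℝ) : Set ℝ :=
  closure (Set.range fun n : ℕ+ => sigmaNeg r (n : ℕ))

/-!
Suppose `q ∤ n`. If every prime factor of `n` exceeds `q`, then `σ_{-r}(n)` is a partial sum of
the Euler product `u_q(r)`, which by mightiness of `q` is below `1 + q^{-r} = σ_{-r}(q)`, hence below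
`σ_{-r}(q) u_p(r)`. Otherwise `n` has a prime factor `ℓ ≤ q - 1`, so
`σ_{-r}(n) ≥ 1 + (q - 1)^{-r}`, while with `x = q^{-r}` and `p^{-r} < x²`,
`σ_{-r}(qp) = (1 + x)(1 + p^{-r}) < 1 + x + x² + x³ < 1 + x / (1 - x) ≤ 1 + (q - 1)^{-r}`,
the last step being the superadditivity `(q - 1)^r + 1 ≤ q^r` for `r ≥ 1`.
-/

lemma sigmaNeg_nonneg (r : ℝ) (n : ℕ) : 0 ≤ sigmaNeg r n :=
  Finset.sum_nonneg fun _ _ => by positivity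

lemma sigmaNeg_prime {p : ℕ} (hp : p.Prime) (r : ℝ) : sigmaNeg r p = 1 + (p : ℝ) ^ (-r) := by
  rw [sigmaNeg, hp.divisors, Finset.sum_pair hp.one_lt.ne]
  norm_num

lemma sigmaNeg_mul_of_coprime {m n : ℕ} (hmn : m.Coprime n) (r : ℝ) :
    sigmaNeg r (m * n) = sigmaNeg r m * sigmaNeg r n := by
  rw [sigmaNeg, Nat.divisors_mul, Finset.mul_def, Finset.sum_image hmn.mul_injOn_divisors,
    Finset.sum_product, sigmaNeg, sigmaNeg, Finset.sum_mul_sum]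
  refine Finset.sum_congr rfl fun a _ => Finset.sum_congr rfl fun b _ => ?_
  push_cast
  exact Real.mul_rpow (Nat.cast_nonneg a) (Nat.cast_nonneg b)

lemma sigmaNeg_le_of_dvd {m n : ℕ} (hn : n ≠ 0) (hmn : m ∣ n) (r : ℝ) :
    sigmaNeg r m ≤ sigmaNeg r n :=
  Finset.sum_le_sum_of_subset_of_nonneg (Nat.divisors_subset_of_dvd hn hmn)
    fun _ _ _ => by positivity

noncomputable def roughRpowNeg (r : ℝ) (q : ℕ) : ℕ →*₀ ℝ where
  toFun m := if m ≠ 0 ∧ ∀ ℓ ∈ m.primeFactors, q < ℓ then (m : ℝ) ^ (-r) else 0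
  map_zero' := by simp
  map_one' := by simp
  map_mul' a b := by
    rcases eq_or_ne a 0 with rfl | ha
    · simp
    rcases eq_or_ne b 0 with rfl | hb
    · simp
    simp only [ne_eq, mul_eq_zero, ha, hb, or_self, not_false_eq_true, true_and,
      Nat.primeFactors_mul ha hb, Finset.forall_mem_union]
    split_ifs <;> simp_all [Real.mul_rpow]

lemma roughRpowNeg_apply (r : ℝ) (q m : ℕ) : roughRpowNeg r q m =
    if m ≠ 0 ∧ ∀ ℓ ∈ m.primeFactors, q < ℓ then (m : ℝ) ^ (-r) else 0 := rfl

lemma roughRpowNeg_nonneg (r : ℝ) (q m : ℕ) : 0 ≤ roughRpowNeg r q m := by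
  rw [roughRpowNeg_apply]
  split_ifs <;> positivity

lemma summable_roughRpowNeg {r : ℝ} (hr : 1 < r) (q : ℕ) :
    Summable fun m => ‖roughRpowNeg r q m‖ := by
  refine (Real.summable_nat_rpow_inv.mpr hr).of_nonneg_of_le (fun _ => norm_nonneg _)
    fun m => ?_
  rw [Real.norm_of_nonneg (roughRpowNeg_nonneg r q m), roughRpowNeg_apply,
    ← Real.rpow_neg (Nat.cast_nonneg m)]
  split_ifs
  exacts [le_rfl, by positivity]

lemma uAfter_eq_tsum_roughRpowNeg {r : ℝ} (hr : 1 < r) (q : ℕ) :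
    uAfter r q = ∑' m, roughRpowNeg r q m := by
  set S := {P : Nat.Primes | q < (P : ℕ)}
  have hfactor : ∀ P : Nat.Primes, (1 - roughRpowNeg r q P)⁻¹ =
      S.mulIndicator (fun P => (1 - ((P : ℕ) : ℝ) ^ (-r))⁻¹) P := by
    intro P
    by_cases hP : P ∈ S
    · rw [Set.mulIndicator_of_mem hP, roughRpowNeg_apply,
        if_pos ⟨P.2.ne_zero, by simpa [P.2.primeFactors]⟩]
    · rw [Set.mulIndicator_of_notMem hP, roughRpowNeg_apply,
        if_neg (by simpa [P.2.primeFactors, P.2.ne_zero, S] using hP), sub_zero, inv_one]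
  rw [← (EulerProduct.eulerProduct_completely_multiplicative_hasProd
    (summable_roughRpowNeg hr q)).tprod_eq, tprod_congr hfactor, ← tprod_subtype]
  rfl

lemma one_le_uAfter {r : ℝ} (hr : 1 < r) (q : ℕ) : 1 ≤ uAfter r q := by
  rw [uAfter_eq_tsum_roughRpowNeg hr q]
  simpa [roughRpowNeg_apply] using (summable_roughRpowNeg hr q).of_norm.le_tsum 1
    fun m _ => roughRpowNeg_nonneg r q m

lemma sigmaNeg_le_uAfter {r : ℝ} (hr : 1 < r) {q n : ℕ} (hn : n ≠ 0)
    (hrough : ∀ ℓ ∈ n.primeFactors, q < ℓ) : sigmaNeg r n ≤ uAfter r q := by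
  rw [uAfter_eq_tsum_roughRpowNeg hr q, sigmaNeg]
  have hdiv : ∀ d ∈ n.divisors, (d : ℝ) ^ (-r) = roughRpowNeg r q d := by
    intro d hd
    rw [roughRpowNeg_apply, if_pos ⟨Nat.ne_of_gt (Nat.pos_of_mem_divisors hd),
      fun ℓ hℓ => hrough ℓ (Nat.primeFactors_mono (Nat.dvd_of_mem_divisors hd) hn hℓ)⟩]
  rw [Finset.sum_congr rfl hdiv]
  exact (summable_roughRpowNeg hr q).of_norm.sum_le_tsum _ fun m _ => roughRpowNeg_nonneg r q m

lemma inv_add_inv_sq_add_inv_cube_lt {t : ℝ} (ht : 1 < t) :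
    t⁻¹ + t⁻¹ ^ 2 + t⁻¹ ^ 3 < (t - 1)⁻¹ := by
  have h0 : 0 < t - 1 := by linarith
  rw [← sub_pos]
  field_simp
  nlinarith

lemma Real.inv_rpow_sub_one_le_sub_one_rpow_neg {x r : ℝ} (hx : 1 < x) (hr : 1 ≤ r) :
    (x ^ r - 1)⁻¹ ≤ (x - 1) ^ (-r) := by
  have hsuper : (x - 1) ^ r + 1 ≤ x ^ r := by
    simpa using Real.add_rpow_le_rpow_add (sub_nonneg.mpr hx.le) zero_le_one hr
  rw [Real.rpow_neg (by linarith)]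
  exact inv_anti₀ (by have := sub_pos.mpr hx; positivity) (by linarith)

lemma rpow_neg_add_sq_add_cube_lt {x r : ℝ} (hx : 1 < x) (hr : 1 ≤ r) :
    x ^ (-r) + (x ^ (-r)) ^ 2 + (x ^ (-r)) ^ 3 < (x - 1) ^ (-r) := by
  rw [Real.rpow_neg (by linarith)]
  exact (inv_add_inv_sq_add_inv_cube_lt (Real.one_lt_rpow hx (by linarith))).trans_le
    (Real.inv_rpow_sub_one_le_sub_one_rpow_neg hx hr)

lemma sigmaNeg_mul_lt_one_add_sub_one_rpow_neg {p q : ℕ} (hp : p.Prime) (hq : q.Prime)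
    (hpq : q ^ 2 < p) {r : ℝ} (hr : 1 ≤ r) :
    sigmaNeg r (q * p) < 1 + ((q : ℝ) - 1) ^ (-r) := by
  have hqp : q ≠ p := by nlinarith [hq.two_le]
  have hq1 : (1 : ℝ) < q := by exact_mod_cast hq.one_lt
  set x := (q : ℝ) ^ (-r)
  have hx : 0 < x := by positivity
  have hpx : (p : ℝ) ^ (-r) < x ^ 2 := by
    rw [Real.rpow_pow_comm (by positivity)]
    exact Real.rpow_lt_rpow_of_neg (by positivity) (by exact_mod_cast hpq) (by linarith)
  calc sigmaNeg r (q * p) = (1 + x) * (1 + (p : ℝ) ^ (-r)) := by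
        rw [sigmaNeg_mul_of_coprime ((Nat.coprime_primes hq hp).mpr hqp), sigmaNeg_prime hq,
          sigmaNeg_prime hp]
    _ < (1 + x) * (1 + x ^ 2) := by gcongr
    _ = 1 + (x + x ^ 2 + x ^ 3) := by ring
    _ < 1 + ((q : ℝ) - 1) ^ (-r) := by gcongr; exact rpow_neg_add_sq_add_cube_lt hq1 hr

theorem statement2_general (r : ℝ) (hr : 1 < r) (p q : ℕ) (hp : p.Prime) (hq : q.Prime)
    (hqm : Mighty r q) (hpq : q ^ 2 < p)
    (n : ℕ)
    (h1 : sigmaNeg r q * uAfter r p < sigmaNeg r n)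
    (h2 : sigmaNeg r n < sigmaNeg r (q * p)) :
    q ∣ n := by
  by_contra hqn
  have hn : n ≠ 0 := by rintro rfl; exact hqn (dvd_zero q)
  by_cases hrough : ∀ ℓ ∈ n.primeFactors, q < ℓ
  · have : sigmaNeg r n < sigmaNeg r q * uAfter r p := calc
      sigmaNeg r n ≤ uAfter r q := sigmaNeg_le_uAfter hr hn hrough
      _ < sigmaNeg r q := by rwa [sigmaNeg_prime hq]
      _ ≤ sigmaNeg r q * uAfter r p :=
        le_mul_of_one_le_right (sigmaNeg_nonneg r q) (one_le_uAfter hr p)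
    linarith
  · push Not at hrough
    obtain ⟨ℓ, hℓn, hℓq⟩ := hrough
    have hℓ : ℓ.Prime := Nat.prime_of_mem_primeFactors hℓn
    have hℓdvd : ℓ ∣ n := Nat.dvd_of_mem_primeFactors hℓn
    have hℓle : (ℓ : ℝ) ≤ q - 1 := by
      have : ℓ < q := hℓq.lt_of_ne (by rintro rfl; exact hqn hℓdvd)
      have : (ℓ : ℝ) + 1 ≤ q := by exact_mod_cast this
      linarith
    have : sigmaNeg r (q * p) < sigmaNeg r n := calc
      sigmaNeg r (q * p) < 1 + ((q : ℝ) - 1) ^ (-r) :=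
        sigmaNeg_mul_lt_one_add_sub_one_rpow_neg hp hq hpq hr.le
      _ ≤ 1 + (ℓ : ℝ) ^ (-r) := by
        gcongr 1 + ?_
        exact Real.rpow_le_rpow_of_nonpos (by exact_mod_cast hℓ.pos) hℓle (by linarith)
      _ = sigmaNeg r ℓ := (sigmaNeg_prime hℓ r).symm
      _ ≤ sigmaNeg r n := sigmaNeg_le_of_dvd hn hℓdvd r
    linarith

theorem statement2 (r : ℝ) (hr : 1 < r) (p q : ℕ) (hp : p.Prime) (hq : q.Prime)
    (hpm : Mighty r p) (hqm : Mighty r q) (hpq : q ^ 2 < p)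
    (n : ℕ) (hn : 0 < n)
    (h1 : sigmaNeg r q * uAfter r p < sigmaNeg r n)
    (h2 : sigmaNeg r n < sigmaNeg r (q * p)) :
    q ∣ n :=
  statement2_general r hr p q hp hq hqm hpq n h1 h2
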